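/- arXiv:1501.02952 — 4 statements merged into one kernel-verified Lean document; each statement's English description precedes it below -/
import Mathlib

section
/- The function η is even and continuous on ℝ (in particular lim_{s→0} η(s) = b), is differentiable on (0,∞) with η'(s) < 0 for every s > 0, satisfies 0 < η(s) < b for all s ≠ 0, and η(s) → 0 as s → ∞. Consequently, the restriction of η to [0,∞) is a strictly decreasing bijection from [0,∞) onto (0, b]. -/
open Real Filter Topology Set

/-- The symbol `η(s) = sinh(s(π−2θ₀))/(2 sinh(sπ))` for `s ≠ 0`, with `η(0) = b = 1/2 − θ₀/π`. -/
noncomputable def eta (θ₀ : ℝ) (s : ℝ) : ℝ :=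
  if s = 0 then 1 / 2 - θ₀ / π
  else Real.sinh (s * (π - 2 * θ₀)) / (2 * Real.sinh (s * π))

/-! With `a = π − 2θ₀ ∈ (0, π)`, `η(s)` is half the ratio `sinh (s a) / sinh (s π)`. Every
property of `η` on `(0, ∞)` comes from two monotonicity facts on `(0, ∞)`: `x ↦ sinh x / x` is
strictly increasing, which bounds the ratio by its value `a / π` at `0`, and `x ↦ x coth x` is
strictly increasing, which is exactly the sign of the derivative. Evenness carries everything to
`s < 0`, and writing the ratio through exponentials gives the decay at infinity. -/

lemma sinh_lt_mul_cosh {x : ℝ} (hx : 0 < x) : sinh x < x * cosh x := by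
  have hmono : StrictMonoOn (fun t => t * cosh t - sinh t) (Ici 0) := by
    refine strictMonoOn_of_deriv_pos (convex_Ici 0) (by fun_prop) fun t ht => ?_
    rw [interior_Ici] at ht
    have hd : HasDerivAt (fun t => t * cosh t - sinh t) (1 * cosh t + t * sinh t - cosh t) t :=
      ((hasDerivAt_id t).mul (hasDerivAt_cosh t)).sub (hasDerivAt_sinh t)
    rw [hd.deriv]
    nlinarith [mul_pos (mem_Ioi.mp ht) (sinh_pos_iff.mpr ht)]
  simpa using hmono self_mem_Ici hx.le hx

lemma strictMonoOn_sinh_div_self : StrictMonoOn (fun x => sinh x / x) (Ioi 0) := by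
  refine strictMonoOn_of_deriv_pos (convex_Ioi 0)
    (continuous_sinh.continuousOn.div continuousOn_id fun x hx => (mem_Ioi.mp hx).ne')
    fun x hx => ?_
  rw [interior_Ioi] at hx
  have hx0 : x ≠ 0 := (mem_Ioi.mp hx).ne'
  have hd : HasDerivAt (fun x => sinh x / x) ((cosh x * x - sinh x * 1) / x ^ 2) x :=
    (hasDerivAt_sinh x).div (hasDerivAt_id' x) hx0
  rw [hd.deriv]
  have := sinh_lt_mul_cosh (mem_Ioi.mp hx)
  exact div_pos (by linarith) (by positivity)

lemma mul_sinh_lt_mul_sinh {u v : ℝ} (hu : 0 < u) (huv : u < v) :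
    v * sinh u < u * sinh v := by
  have h := strictMonoOn_sinh_div_self hu (hu.trans huv) huv
  rw [div_lt_div_iff₀ hu (hu.trans huv)] at h
  linarith

lemma mul_cosh_mul_sinh_lt {u v : ℝ} (hu : 0 < u) (huv : u < v) :
    u * cosh u * sinh v < v * sinh u * cosh v := by
  -- apply `mul_sinh_lt_mul_sinh` to `v - u < v + u` and expand with the addition formulas
  have h := mul_sinh_lt_mul_sinh (u := v - u) (v := v + u) (by linarith) (by linarith)
  rw [sinh_sub, sinh_add] at h
  linarith

lemma sinh_div_sinh_eq_exp {x y : ℝ} (hy : y ≠ 0) :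
    sinh x / sinh y = (exp (x - y) - exp (-x - y)) / (1 - exp (-2 * y)) := by
  have h1 : sinh y ≠ 0 := sinh_ne_zero.mpr hy
  have h2 : 1 - exp (-2 * y) ≠ 0 := by
    rw [sub_ne_zero, ne_comm, Ne, exp_eq_one_iff]
    simpa using hy
  rw [div_eq_div_iff h1 h2, sinh_eq, sinh_eq, exp_sub, sub_eq_add_neg (-x), exp_add,
    show -2 * y = -(y + y) by ring, exp_neg, exp_neg, exp_neg, exp_add]
  field_simp

lemma tendsto_sinh_mul_div_self_nhdsNE_zero (c : ℝ) :
    Tendsto (fun s => sinh (s * c) / s) (𝓝[≠] 0) (𝓝 c) := by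
  have hd := ((hasDerivAt_id (0 : ℝ)).mul_const c).sinh.tendsto_slope_zero
  simp only [id, zero_add, zero_mul, sinh_zero, cosh_zero, sub_zero, one_mul, smul_eq_mul] at hd
  exact hd.congr fun s => inv_mul_eq_div _ _

section Ratio

variable {a c : ℝ}

lemma sinh_mul_div_sinh_mul_lt {s : ℝ} (ha : 0 < a) (hac : a < c) (hs : 0 < s) :
    sinh (s * a) / sinh (s * c) < a / c := by
  have hc : 0 < c := ha.trans hac
  have h := mul_sinh_lt_mul_sinh (mul_pos hs ha) (mul_lt_mul_of_pos_left hac hs)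
  rw [div_lt_div_iff₀ (sinh_pos_iff.mpr (mul_pos hs hc)) hc]
  nlinarith

lemma hasDerivAt_sinh_mul_div_sinh_mul {s : ℝ} (hs : sinh (s * c) ≠ 0) :
    HasDerivAt (fun t => sinh (t * a) / sinh (t * c))
      ((a * cosh (s * a) * sinh (s * c) - c * sinh (s * a) * cosh (s * c)) / sinh (s * c) ^ 2)
      s := by
  have hd : HasDerivAt (fun t => sinh (t * a) / sinh (t * c))
      ((cosh (s * a) * a * sinh (s * c) - sinh (s * a) * (cosh (s * c) * c)) / sinh (s * c) ^ 2)
      s :=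
    (hasDerivAt_mul_const a).sinh.div (hasDerivAt_mul_const c).sinh hs
  exact hd.congr_deriv (by ring)

lemma mul_cosh_mul_sinh_sub_lt_zero {s : ℝ} (ha : 0 < a) (hac : a < c) (hs : 0 < s) :
    a * cosh (s * a) * sinh (s * c) - c * sinh (s * a) * cosh (s * c) < 0 := by
  have h := mul_cosh_mul_sinh_lt (mul_pos hs ha) (mul_lt_mul_of_pos_left hac hs)
  have h' : s * (a * cosh (s * a) * sinh (s * c)) < s * (c * sinh (s * a) * cosh (s * c)) := by
    linarith
  linarith [lt_of_mul_lt_mul_left h' hs.le]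

lemma tendsto_sinh_mul_div_sinh_mul_atTop (h : |a| < c) :
    Tendsto (fun s => sinh (s * a) / sinh (s * c)) atTop (𝓝 0) := by
  obtain ⟨hca, hac⟩ := abs_lt.mp h
  have hc : 0 < c := by linarith
  have hexp : ∀ k : ℝ, k < 0 → Tendsto (fun s => exp (s * k)) atTop (𝓝 0) := fun k hk =>
    tendsto_exp_comp_nhds_zero.mpr ((tendsto_mul_const_atBot_of_neg hk).mpr tendsto_id)
  have hlim : Tendsto
      (fun s => (exp (s * (a - c)) - exp (s * -(a + c))) / (1 - exp (s * -(2 * c))))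
      atTop (𝓝 ((0 - 0) / (1 - 0))) :=
    ((hexp _ (by linarith)).sub (hexp _ (by linarith))).div
      (tendsto_const_nhds.sub (hexp _ (by linarith))) (by norm_num)
  rw [sub_zero, zero_div] at hlim
  refine hlim.congr' ?_
  filter_upwards [eventually_gt_atTop 0] with s hs
  rw [sinh_div_sinh_eq_exp (mul_pos hs hc).ne']
  ring_nf

lemma tendsto_sinh_mul_div_sinh_mul_nhdsNE_zero (hc : c ≠ 0) :
    Tendsto (fun s => sinh (s * a) / sinh (s * c)) (𝓝[≠] 0) (𝓝 (a / c)) := by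
  refine ((tendsto_sinh_mul_div_self_nhdsNE_zero a).div
    (tendsto_sinh_mul_div_self_nhdsNE_zero c) hc).congr' ?_
  filter_upwards [self_mem_nhdsWithin] with s (hs : s ≠ 0)
  exact div_div_div_cancel_right₀ hs _ _

end Ratio

section Eta

variable {θ₀ : ℝ}

lemma eta_zero : eta θ₀ 0 = 1 / 2 - θ₀ / π := if_pos rfl

lemma eta_of_ne_zero {s : ℝ} (hs : s ≠ 0) :
    eta θ₀ s = sinh (s * (π - 2 * θ₀)) / sinh (s * π) / 2 := by
  rw [eta, if_neg hs, div_div, mul_comm (sinh _) 2]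

lemma eta_eventuallyEq {s : ℝ} (hs : s ≠ 0) :
    eta θ₀ =ᶠ[𝓝 s] fun t => sinh (t * (π - 2 * θ₀)) / sinh (t * π) / 2 := by
  filter_upwards [isOpen_ne.mem_nhds hs] with t ht
  exact eta_of_ne_zero ht

lemma eta_neg (s : ℝ) : eta θ₀ (-s) = eta θ₀ s := by
  rcases eq_or_ne s 0 with rfl | hs
  · rw [neg_zero]
  · rw [eta_of_ne_zero hs, eta_of_ne_zero (neg_ne_zero.mpr hs), neg_mul, neg_mul, sinh_neg,
      sinh_neg, neg_div_neg_eq]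

lemma continuous_eta : Continuous (eta θ₀) := by
  refine continuous_iff_continuousAt.mpr fun s => ?_
  rcases eq_or_ne s 0 with rfl | hs
  · rw [← continuousWithinAt_compl_self, ContinuousWithinAt, eta_zero]
    have hlim :=
      (tendsto_sinh_mul_div_sinh_mul_nhdsNE_zero (a := π - 2 * θ₀) pi_ne_zero).div_const 2
    rw [show (π - 2 * θ₀) / π / 2 = 1 / 2 - θ₀ / π by field_simp] at hlim
    exact hlim.congr' (eventually_nhdsWithin_of_forall fun t ht => (eta_of_ne_zero ht).symm)
  · refine ContinuousAt.congr ?_ (eta_eventuallyEq hs).symm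
    have : sinh (s * π) ≠ 0 := sinh_ne_zero.mpr (mul_ne_zero hs pi_ne_zero)
    fun_prop (disch := assumption)

lemma eta_pos_of_pos (h1 : θ₀ < π / 2) {s : ℝ} (hs : 0 < s) : 0 < eta θ₀ s := by
  rw [eta_of_ne_zero hs.ne']
  have : 0 < sinh (s * (π - 2 * θ₀)) := sinh_pos_iff.mpr (mul_pos hs (by linarith))
  have : 0 < sinh (s * π) := sinh_pos_iff.mpr (mul_pos hs pi_pos)
  positivity

lemma eta_lt_of_pos (h0 : 0 < θ₀) (h1 : θ₀ < π / 2) {s : ℝ} (hs : 0 < s) :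
    eta θ₀ s < 1 / 2 - θ₀ / π := by
  rw [eta_of_ne_zero hs.ne', show 1 / 2 - θ₀ / π = (π - 2 * θ₀) / π / 2 by field_simp]
  exact div_lt_div_of_pos_right (sinh_mul_div_sinh_mul_lt (by linarith) (by linarith) hs) two_pos

lemma eta_pos_and_lt (h0 : 0 < θ₀) (h1 : θ₀ < π / 2) {s : ℝ} (hs : s ≠ 0) :
    0 < eta θ₀ s ∧ eta θ₀ s < 1 / 2 - θ₀ / π := by
  rcases hs.lt_or_gt with hs | hs
  · rw [← eta_neg s]
    exact ⟨eta_pos_of_pos h1 (neg_pos.mpr hs), eta_lt_of_pos h0 h1 (neg_pos.mpr hs)⟩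
  · exact ⟨eta_pos_of_pos h1 hs, eta_lt_of_pos h0 h1 hs⟩

lemma exists_neg_hasDerivAt_eta (h0 : 0 < θ₀) (h1 : θ₀ < π / 2) {s : ℝ} (hs : 0 < s) :
    ∃ d < 0, HasDerivAt (eta θ₀) d s := by
  have hsinh : 0 < sinh (s * π) := sinh_pos_iff.mpr (mul_pos hs pi_pos)
  refine ⟨_, ?_, ((hasDerivAt_sinh_mul_div_sinh_mul hsinh.ne').div_const 2).congr_of_eventuallyEq
    (eta_eventuallyEq hs.ne')⟩
  have := mul_cosh_mul_sinh_sub_lt_zero (a := π - 2 * θ₀) (c := π) (by linarith)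
    (by linarith) hs
  exact div_neg_of_neg_of_pos (div_neg_of_neg_of_pos this (by positivity)) two_pos

lemma tendsto_eta_atTop (h0 : 0 < θ₀) (h1 : θ₀ < π / 2) : Tendsto (eta θ₀) atTop (𝓝 0) := by
  have hlim := (tendsto_sinh_mul_div_sinh_mul_atTop (a := π - 2 * θ₀) (c := π)
    (abs_lt.mpr ⟨by linarith, by linarith⟩)).div_const 2
  rw [zero_div] at hlim
  exact hlim.congr' (eventually_atTop.mpr ⟨1, fun s hs => (eta_of_ne_zero (by linarith)).symm⟩)

lemma strictAntiOn_eta (h0 : 0 < θ₀) (h1 : θ₀ < π / 2) : StrictAntiOn (eta θ₀) (Ici 0) := by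
  refine strictAntiOn_of_deriv_neg (convex_Ici 0) continuous_eta.continuousOn fun s hs => ?_
  rw [interior_Ici] at hs
  obtain ⟨d, hd, hderiv⟩ := exists_neg_hasDerivAt_eta h0 h1 hs
  rwa [hderiv.deriv]

end Eta

lemma StrictAntiOn.bijOn_Ici_Ioc {f : ℝ → ℝ} {a l : ℝ} (hf : StrictAntiOn f (Ici a))
    (hc : ContinuousOn f (Ici a)) (hl : Tendsto f atTop (𝓝 l)) :
    BijOn f (Ici a) (Ioc l (f a)) := by
  have hlt : ∀ x ∈ Ici a, l < f x := fun x hx => by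
    have hx1 : x + 1 ∈ Ici a := mem_Ici.mpr (by linarith [mem_Ici.mp hx])
    refine (le_of_tendsto hl ?_).trans_lt (hf hx hx1 (lt_add_one x))
    filter_upwards [eventually_ge_atTop (x + 1)] with y hy
    exact hf.antitoneOn hx1 (mem_Ici.mpr (by linarith [mem_Ici.mp hx1])) hy
  refine ⟨fun x hx => ⟨hlt x hx, hf.antitoneOn self_mem_Ici hx hx⟩, hf.injOn, ?_⟩
  rintro y ⟨hly, hya⟩
  obtain ⟨b, hby, hab⟩ := ((hl.eventually_lt_const hly).and (eventually_ge_atTop a)).exists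
  obtain ⟨t, ht, rfl⟩ := intermediate_value_Icc' hab (hc.mono Icc_subset_Ici_self) ⟨hby.le, hya⟩
  exact ⟨t, ht.1, rfl⟩

/-- `η` is even and continuous on `ℝ`, differentiable on `(0,∞)` with `η' < 0`
there, satisfies `0 < η(s) < b` for all `s ≠ 0`, and `η(s) → 0` as `s → ∞`; consequently the
restriction of `η` to `[0,∞)` is a strictly decreasing bijection from `[0,∞)` onto `(0, b]`. -/
theorem statement5 (θ₀ : ℝ) (h0 : 0 < θ₀) (h1 : θ₀ < π / 2) :
    (∀ s : ℝ, eta θ₀ (-s) = eta θ₀ s) ∧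
    Continuous (eta θ₀) ∧
    (∀ s : ℝ, 0 < s → DifferentiableAt ℝ (eta θ₀) s ∧ deriv (eta θ₀) s < 0) ∧
    (∀ s : ℝ, s ≠ 0 → 0 < eta θ₀ s ∧ eta θ₀ s < 1 / 2 - θ₀ / π) ∧
    Tendsto (eta θ₀) atTop (𝓝 0) ∧
    StrictAntiOn (eta θ₀) (Ici 0) ∧
    BijOn (eta θ₀) (Ici 0) (Ioc 0 (1 / 2 - θ₀ / π)) := by
  have hderiv (s : ℝ) (hs : 0 < s) : DifferentiableAt ℝ (eta θ₀) s ∧ deriv (eta θ₀) s < 0 := by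
    obtain ⟨d, hd, hderiv⟩ := exists_neg_hasDerivAt_eta h0 h1 hs
    exact ⟨hderiv.differentiableAt, hderiv.deriv ▸ hd⟩
  have hbij := (strictAntiOn_eta h0 h1).bijOn_Ici_Ioc continuous_eta.continuousOn
    (tendsto_eta_atTop h0 h1)
  rw [eta_zero] at hbij
  exact ⟨eta_neg, continuous_eta, hderiv, fun s hs => eta_pos_and_lt h0 h1 hs,
    tendsto_eta_atTop h0 h1, strictAntiOn_eta h0 h1, hbij⟩
end

section
/- Absolute continuity of the spectral measure: let f, g ∈ W* have continuous components f₁, f₂, g₁, g₂ on ℝ. Then the function t ↦ ⟨f, E_t[g]⟩_{W*} is differentiable at every t ∈ (−b, 0) ∪ (0, b), with derivative equal to p₁(s)/(2|η'(s)|) · [f₁(s)·conj(g₁(s)) + f₁(−s)·conj(g₁(−s))] for t ∈ (0, b) where s = σ(t), and equal to p₂(s)/(2|η'(s)|) · [f₂(s)·conj(g₂(s)) + f₂(−s)·conj(g₂(−s))] for t ∈ (−b, 0) where s = σ(−t). -/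
open Real Filter Topology Set MeasureTheory

/-- The weight `p₁`. -/
noncomputable def p1 (θ₀ : ℝ) (s : ℝ) : ℝ :=
  if s = 0 then θ₀ * (π - θ₀) / π
  else Real.sinh (s * θ₀) * Real.sinh (s * (π - θ₀)) / (s * Real.sinh (s * π))

/-- The weight `p₂`. -/
noncomputable def p2 (θ₀ : ℝ) (s : ℝ) : ℝ :=
  Real.cosh (s * θ₀) * Real.cosh (s * (π - θ₀)) / (s * Real.sinh (s * π))

/-- The measure `p₁(s) ds`. -/
noncomputable def mu1 (θ₀ : ℝ) : Measure ℝ :=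
  (volume : Measure ℝ).withDensity fun s => ENNReal.ofReal (p1 θ₀ s)

/-- The measure `p₂(s) ds`. -/
noncomputable def mu2 (θ₀ : ℝ) : Measure ℝ :=
  (volume : Measure ℝ).withDensity fun s => ENNReal.ofReal (p2 θ₀ s)

open ComplexConjugate

/-!
For `0 < t < b` the function `G` equals a constant minus `½ ∫_{-σ(t)}^{σ(t)} p₁ f₁ conj g₁`, and for
`-b < t < 0` it equals `½ ∫_{-σ(-t)}^{σ(-t)} p₂ f₂ conj g₂`; the integrands are Lebesgue integrable
by Cauchy–Schwarz in `L²(pᵢ ds)`. By the fundamental theorem of calculus `a ↦ ∫_{-a}^{a} h` has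
derivative `h a + h (-a)` wherever `h` is continuous at `±a`, and by the inverse function theorem
`σ` has derivative `1 / η'(σ t)`, so the chain rule and the evenness of `pᵢ` give the formula. That
`η' < 0` on `(0, ∞)` comes down to `y sinh x < x sinh y` for `0 < x < y`, i.e. to the convexity of
`sinh` on `[0, ∞)`.
-/

lemma sinh_strictConvexOn : StrictConvexOn ℝ (Ici 0) sinh := by
  refine StrictMonoOn.strictConvexOn_of_deriv (convex_Ici 0) continuous_sinh.continuousOn ?_
  rw [interior_Ici, Real.deriv_sinh]
  exact cosh_strictMonoOn.mono Ioi_subset_Ici_self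

lemma mul_sinh_lt_mul_sinh_s14 {a b : ℝ} (ha : 0 < a) (hab : a < b) : b * sinh a < a * sinh b := by
  have hb : 0 < b := ha.trans hab
  -- `a = (1 - a / b) • 0 + (a / b) • b` and `sinh 0 = 0`
  have key := sinh_strictConvexOn.2 (mem_Ici.2 le_rfl) (mem_Ici.2 hb.le) hb.ne
    (sub_pos.2 ((div_lt_one hb).2 hab)) (div_pos ha hb) (sub_add_cancel 1 (a / b))
  simp only [smul_eq_mul, mul_zero, zero_add, sinh_zero] at key
  rw [div_mul_cancel₀ a hb.ne', div_mul_eq_mul_div, lt_div_iff₀ hb] at key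
  linarith

lemma mul_cosh_mul_sinh_lt_s14 {c d s : ℝ} (hc : 0 < c) (hcd : c < d) (hs : 0 < s) :
    c * cosh (s * c) * sinh (s * d) < d * sinh (s * c) * cosh (s * d) := by
  have key := mul_sinh_lt_mul_sinh_s14 (mul_pos hs (sub_pos.2 hcd))
    (mul_lt_mul_of_pos_left (by linarith : d - c < d + c) hs)
  have hsplit : s * (d - c) = s * d - s * c := by ring
  have hsplit' : s * (d + c) = s * d + s * c := by ring
  -- by the addition formulas, twice the difference of the two sides is
  -- `(d - c) sinh (s (d + c)) - (d + c) sinh (s (d - c))`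
  rw [hsplit, hsplit', sinh_sub, sinh_add] at key
  nlinarith

lemma hasDerivAt_eta (θ₀ : ℝ) {s : ℝ} (hs : s ≠ 0) :
    HasDerivAt (eta θ₀)
      (((π - 2 * θ₀) * cosh (s * (π - 2 * θ₀)) * sinh (s * π)
        - π * sinh (s * (π - 2 * θ₀)) * cosh (s * π)) / (2 * sinh (s * π) ^ 2)) s := by
  have hsinh : sinh (s * π) ≠ 0 := sinh_ne_zero.2 (mul_ne_zero hs pi_ne_zero)
  have hnum : HasDerivAt (fun x => sinh (x * (π - 2 * θ₀)))
      (cosh (s * (π - 2 * θ₀)) * (π - 2 * θ₀)) s :=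
    (hasDerivAt_mul_const (π - 2 * θ₀)).sinh
  have hden : HasDerivAt (fun x => 2 * sinh (x * π)) (2 * (cosh (s * π) * π)) s :=
    ((hasDerivAt_mul_const π).sinh).const_mul 2
  have hquot := hnum.div hden (mul_ne_zero two_ne_zero hsinh)
  refine (hquot.congr_deriv ?_).congr_of_eventuallyEq ?_
  · field_simp
  · filter_upwards [eventually_ne_nhds hs] with x hx
    simp [eta, hx]

lemma deriv_eta_neg {θ₀ : ℝ} (h0 : 0 < θ₀) (h1 : θ₀ < π / 2) {s : ℝ} (hs : 0 < s) :
    deriv (eta θ₀) s < 0 := by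
  rw [(hasDerivAt_eta θ₀ hs.ne').deriv]
  refine div_neg_of_neg_of_pos ?_ (by positivity)
  linarith [mul_cosh_mul_sinh_lt_s14 (by linarith : 0 < π - 2 * θ₀) (by linarith : π - 2 * θ₀ < π) hs]

lemma eta_strictAntiOn {θ₀ : ℝ} (h0 : 0 < θ₀) (h1 : θ₀ < π / 2) :
    StrictAntiOn (eta θ₀) (Ioi 0) := by
  refine strictAntiOn_of_deriv_neg (convex_Ioi 0)
    (fun x hx => (hasDerivAt_eta θ₀ (ne_of_gt hx)).continuousAt.continuousWithinAt) ?_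
  rw [interior_Ioi]
  exact fun x hx => deriv_eta_neg h0 h1 hx

section Sigma

variable {θ₀ : ℝ} (h0 : 0 < θ₀) (h1 : θ₀ < π / 2) {σ : ℝ → ℝ}
  (hσ : ∀ t : ℝ, 0 < t → t ≤ 1 / 2 - θ₀ / π → 0 ≤ σ t ∧ eta θ₀ (σ t) = t)
include hσ

lemma sigma_pos {t : ℝ} (ht : t ∈ Ioo 0 (1 / 2 - θ₀ / π)) : 0 < σ t := by
  obtain ⟨hσ_nonneg, hησ⟩ := hσ t ht.1 ht.2.le
  refine hσ_nonneg.lt_of_ne fun hσ_zero => ?_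
  rw [← hσ_zero] at hησ
  simp only [eta, if_true] at hησ
  exact ht.2.ne hησ.symm

include h0 h1

lemma sigma_strictAntiOn : StrictAntiOn σ (Ioo 0 (1 / 2 - θ₀ / π)) := by
  intro t ht u hu htu
  by_contra! hle
  have := (eta_strictAntiOn h0 h1).antitoneOn (sigma_pos hσ ht) (sigma_pos hσ hu) hle
  rw [(hσ t ht.1 ht.2.le).2, (hσ u hu.1 hu.2.le).2] at this
  exact htu.not_ge this

lemma sigma_eta {s : ℝ} (hs : 0 < s) (hηs : eta θ₀ s ∈ Ioo 0 (1 / 2 - θ₀ / π)) :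
    σ (eta θ₀ s) = s :=
  (eta_strictAntiOn h0 h1).injOn (sigma_pos hσ hηs) hs (hσ _ hηs.1 hηs.2.le).2

lemma sigma_continuousAt {t : ℝ} (ht : t ∈ Ioo 0 (1 / 2 - θ₀ / π)) : ContinuousAt σ t := by
  have hs := sigma_pos hσ ht
  have hησ : eta θ₀ (σ t) = t := (hσ t ht.1 ht.2.le).2
  have hη : ContinuousAt (eta θ₀) (σ t) := (hasDerivAt_eta θ₀ hs.ne').continuousAt
  have himage : σ '' Ioo 0 (1 / 2 - θ₀ / π) ∈ 𝓝 (σ t) := by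
    have hpre : eta θ₀ ⁻¹' Ioo 0 (1 / 2 - θ₀ / π) ∈ 𝓝 (σ t) :=
      hη.preimage_mem_nhds (by rw [hησ]; exact isOpen_Ioo.mem_nhds ht)
    filter_upwards [hpre, Ioi_mem_nhds hs] with s hηs hs_pos
    exact ⟨eta θ₀ s, hηs, sigma_eta h0 h1 hσ hs_pos hηs⟩
  have hmono : MonotoneOn (fun u => OrderDual.toDual (σ u)) (Ioo 0 (1 / 2 - θ₀ / π)) :=
    fun u hu v hv huv => (sigma_strictAntiOn h0 h1 hσ).antitoneOn hu hv huv
  exact continuousAt_of_monotoneOn_of_image_mem_nhds (β := ℝᵒᵈ) hmono (isOpen_Ioo.mem_nhds ht)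
    himage

lemma sigma_hasDerivAt {t : ℝ} (ht : t ∈ Ioo 0 (1 / 2 - θ₀ / π)) :
    HasDerivAt σ (deriv (eta θ₀) (σ t))⁻¹ t := by
  have hs := sigma_pos hσ ht
  refine HasDerivAt.of_local_left_inverse (sigma_continuousAt h0 h1 hσ ht)
    (hasDerivAt_eta θ₀ hs.ne').differentiableAt.hasDerivAt (deriv_eta_neg h0 h1 hs).ne ?_
  filter_upwards [isOpen_Ioo.mem_nhds ht] with u hu
  exact (hσ u hu.1 hu.2.le).2

end Sigma

lemma mul_sinh_nonneg {x y : ℝ} (h : 0 ≤ x * y) : 0 ≤ x * sinh y := by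
  rcases mul_nonneg_iff.1 h with ⟨hx, hy⟩ | ⟨hx, hy⟩
  · exact mul_nonneg hx (sinh_nonneg_iff.2 hy)
  · exact mul_nonneg_of_nonpos_of_nonpos hx (sinh_nonpos_iff.2 hy)

lemma sinh_mul_sinh_nonneg {x y : ℝ} (h : 0 ≤ x * y) : 0 ≤ sinh x * sinh y :=
  mul_sinh_nonneg (by rw [mul_comm]; exact mul_sinh_nonneg (by rwa [mul_comm]))

lemma p1_nonneg {θ₀ : ℝ} (h0 : 0 < θ₀) (h1 : θ₀ < π / 2) (s : ℝ) : 0 ≤ p1 θ₀ s := by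
  have hπθ : 0 < π - θ₀ := by linarith
  unfold p1
  split_ifs
  · positivity
  · refine div_nonneg (sinh_mul_sinh_nonneg ?_) (mul_sinh_nonneg ?_)
    · nlinarith [mul_self_nonneg s, mul_pos h0 hπθ]
    · nlinarith [mul_self_nonneg s, pi_pos]

lemma p2_nonneg (θ₀ s : ℝ) : 0 ≤ p2 θ₀ s :=
  div_nonneg (mul_pos (cosh_pos _) (cosh_pos _)).le
    (mul_sinh_nonneg (by nlinarith [mul_self_nonneg s, pi_pos]))

lemma p1_neg (θ₀ s : ℝ) : p1 θ₀ (-s) = p1 θ₀ s := by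
  simp only [p1, neg_eq_zero, neg_mul, sinh_neg]
  split_ifs <;> ring

lemma p2_neg (θ₀ s : ℝ) : p2 θ₀ (-s) = p2 θ₀ s := by
  simp only [p2, neg_mul, cosh_neg, sinh_neg]
  ring

lemma measurable_p1 (θ₀ : ℝ) : Measurable (p1 θ₀) :=
  Measurable.ite measurableSet_eq measurable_const (by fun_prop)

lemma measurable_p2 (θ₀ : ℝ) : Measurable (p2 θ₀) := by
  unfold p2
  fun_prop

lemma continuousAt_p2 (θ₀ : ℝ) {s : ℝ} (hs : s ≠ 0) : ContinuousAt (p2 θ₀) s :=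
  ContinuousAt.div (by fun_prop) (by fun_prop)
    (mul_ne_zero hs (sinh_ne_zero.2 (mul_ne_zero hs pi_ne_zero)))

lemma continuousAt_p1 (θ₀ : ℝ) {s : ℝ} (hs : s ≠ 0) : ContinuousAt (p1 θ₀) s := by
  have hc : ContinuousAt (fun x => sinh (x * θ₀) * sinh (x * (π - θ₀)) / (x * sinh (x * π))) s :=
    ContinuousAt.div (by fun_prop) (by fun_prop)
      (mul_ne_zero hs (sinh_ne_zero.2 (mul_ne_zero hs pi_ne_zero)))
  refine hc.congr (Filter.EventuallyEq.symm ?_)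
  filter_upwards [eventually_ne_nhds hs] with x hx
  simp [p1, hx]

section Integrals

variable {E : Type*} [NormedAddCommGroup E] [NormedSpace ℝ E] [CompleteSpace E]

lemma hasDerivAt_intervalIntegral_neg_self {h : ℝ → E} (hint : Integrable h) {a : ℝ}
    (hca : ContinuousAt h a) (hcna : ContinuousAt h (-a)) :
    HasDerivAt (fun u => ∫ x in -u..u, h x) (h a + h (-a)) a := by
  have hF := intervalIntegral.integral_hasFDerivAt (hint.intervalIntegrable (a := -a) (b := a))
    hint.aestronglyMeasurable.stronglyMeasurableAtFilter
    hint.aestronglyMeasurable.stronglyMeasurableAtFilter hcna hca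
  have := hF.comp_hasDerivAt (f := fun u : ℝ => (-u, u)) a
    ((hasDerivAt_neg a).prodMk (hasDerivAt_id' a))
  simpa [Function.comp_def, sub_eq_add_neg, add_comm] using this

lemma integrable_mul_conj_of_memLp_withDensity {α : Type*} [MeasurableSpace α] {μ : Measure α}
    {p : α → ℝ} (hp : Measurable p) (hp_nonneg : ∀ s, 0 ≤ p s) {f g : α → ℂ}
    (hf : MemLp f 2 (μ.withDensity fun s => ENNReal.ofReal (p s)))
    (hg : MemLp g 2 (μ.withDensity fun s => ENNReal.ofReal (p s))) :
    Integrable (fun s => (p s : ℂ) * f s * conj (g s)) μ := by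
  have hfg : Integrable (fun s => f s * conj (g s))
      (μ.withDensity fun s => ENNReal.ofReal (p s)) := by
    have hpqr : ENNReal.HolderTriple 2 2 1 := ⟨by norm_num [ENNReal.inv_two_add_inv_two]⟩
    have hgc : MemLp (fun s => conj (g s)) 2 (μ.withDensity fun s => ENNReal.ofReal (p s)) :=
      hg.star
    have := memLp_one_iff_integrable.1 (hgc.smul hf)
    simpa only [Pi.smul_def, smul_eq_mul, Pi.mul_def] using this
  have := (integrable_withDensity_iff_integrable_smul' (ENNReal.measurable_ofReal.comp hp)
    (Eventually.of_forall fun _ => ENNReal.ofReal_lt_top)).1 hfg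
  refine this.congr (Eventually.of_forall fun s => ?_)
  simp only [Function.comp_apply, ENNReal.toReal_ofReal (hp_nonneg s), Complex.real_smul, mul_assoc]

end Integrals

section SpectralDerivative

variable {θ₀ : ℝ} (h0 : 0 < θ₀) (h1 : θ₀ < π / 2) {σ : ℝ → ℝ}
  (hσ : ∀ t : ℝ, 0 < t → t ≤ 1 / 2 - θ₀ / π → 0 ≤ σ t ∧ eta θ₀ (σ t) = t)
include h0 h1 hσ

lemma hasDerivAt_half_setIntegral_Ioc_sigma {p : ℝ → ℝ} (hp : ∀ s, p (-s) = p s) {f g : ℝ → ℂ}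
    (hint : Integrable fun s => (p s : ℂ) * f s * conj (g s))
    (hcont : ∀ s ≠ 0, ContinuousAt (fun s => (p s : ℂ) * f s * conj (g s)) s)
    {t : ℝ} (ht : t ∈ Ioo 0 (1 / 2 - θ₀ / π)) :
    HasDerivAt (fun u => (1 / 2 : ℂ) * ∫ x in Ioc (-σ u) (σ u), (p x : ℂ) * f x * conj (g x))
      (-(((p (σ t) / (2 * |deriv (eta θ₀) (σ t)|) : ℝ) : ℂ) *
        (f (σ t) * conj (g (σ t)) + f (-σ t) * conj (g (-σ t))))) t := by
  have hs := sigma_pos hσ ht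
  have hη' := deriv_eta_neg h0 h1 hs
  have hI := (hasDerivAt_intervalIntegral_neg_self hint (hcont _ hs.ne')
    (hcont _ (neg_ne_zero.2 hs.ne'))).scomp t (sigma_hasDerivAt h0 h1 hσ ht)
  have hIoc : (fun u => ∫ x in Ioc (-σ u) (σ u), (p x : ℂ) * f x * conj (g x)) =ᶠ[𝓝 t]
      fun u => ∫ x in -σ u..σ u, (p x : ℂ) * f x * conj (g x) := by
    filter_upwards [isOpen_Ioo.mem_nhds ht] with u hu
    rw [intervalIntegral.integral_of_le (neg_le_self (hσ u hu.1 hu.2.le).1)]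
  refine ((hI.congr_of_eventuallyEq hIoc).const_mul (1 / 2 : ℂ)).congr_deriv ?_
  rw [hp, abs_of_neg hη', Complex.real_smul]
  push_cast
  field_simp

end SpectralDerivative

/-- absolute continuity of the spectral measure: for `f, g ∈ W*` with
continuous components, the function `G(t) = ⟨f, E_t[g]⟩_{W*}` (written out explicitly from
the definition of the spectral family `E_t`, with the paper's inner product
`⟨φ,ψ⟩ = (1/2)∫ p φ conj(ψ)`) is differentiable at every `t ∈ (−b,0) ∪ (0,b)` with
`G'(t) = p₁(s)/(2|η'(s)|)·[f₁(s)conj(g₁(s)) + f₁(−s)conj(g₁(−s))]`, `s = σ(t)`, for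
`t ∈ (0,b)`, and `G'(t) = p₂(s)/(2|η'(s)|)·[f₂(s)conj(g₂(s)) + f₂(−s)conj(g₂(−s))]`,
`s = σ(−t)`, for `t ∈ (−b,0)`. Here `σ` inverts `η|_{[0,∞)}` and `b = 1/2 − θ₀/π`. -/
theorem statement14 (θ₀ : ℝ) (h0 : 0 < θ₀) (h1 : θ₀ < π / 2) (σ : ℝ → ℝ)
    (hσ : ∀ t : ℝ, 0 < t → t ≤ 1 / 2 - θ₀ / π → 0 ≤ σ t ∧ eta θ₀ (σ t) = t)
    (f₁ f₂ g₁ g₂ : ℝ → ℂ)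
    (hf₁c : Continuous f₁) (hf₂c : Continuous f₂)
    (hg₁c : Continuous g₁) (hg₂c : Continuous g₂)
    (hf₁ : MemLp f₁ 2 (mu1 θ₀)) (hf₂ : MemLp f₂ 2 (mu2 θ₀))
    (hg₁ : MemLp g₁ 2 (mu1 θ₀)) (hg₂ : MemLp g₂ 2 (mu2 θ₀))
    (G : ℝ → ℂ)
    (hG : ∀ t : ℝ, G t =
      if 0 < t then
        (1 / 2) * (∫ s in (Set.Ioc (-(σ t)) (σ t))ᶜ,
            (p1 θ₀ s : ℂ) * f₁ s * starRingEnd ℂ (g₁ s))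
          + (1 / 2) * ∫ s, (p2 θ₀ s : ℂ) * f₂ s * starRingEnd ℂ (g₂ s)
      else if t < 0 then
        (1 / 2) * ∫ s in Set.Ioc (-(σ (-t))) (σ (-t)),
            (p2 θ₀ s : ℂ) * f₂ s * starRingEnd ℂ (g₂ s)
      else (1 / 2) * ∫ s, (p2 θ₀ s : ℂ) * f₂ s * starRingEnd ℂ (g₂ s)) :
    (∀ t : ℝ, 0 < t → t < 1 / 2 - θ₀ / π →
      HasDerivAt G
        (((p1 θ₀ (σ t) / (2 * |deriv (eta θ₀) (σ t)|) : ℝ) : ℂ) *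
          (f₁ (σ t) * starRingEnd ℂ (g₁ (σ t))
            + f₁ (-(σ t)) * starRingEnd ℂ (g₁ (-(σ t))))) t) ∧
    (∀ t : ℝ, -(1 / 2 - θ₀ / π) < t → t < 0 →
      HasDerivAt G
        (((p2 θ₀ (σ (-t)) / (2 * |deriv (eta θ₀) (σ (-t))|) : ℝ) : ℂ) *
          (f₂ (σ (-t)) * starRingEnd ℂ (g₂ (σ (-t)))
            + f₂ (-(σ (-t))) * starRingEnd ℂ (g₂ (-(σ (-t)))))) t) := by
  have hint₁ :=
    integrable_mul_conj_of_memLp_withDensity (measurable_p1 θ₀) (p1_nonneg h0 h1) hf₁ hg₁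
  have hint₂ :=
    integrable_mul_conj_of_memLp_withDensity (measurable_p2 θ₀) (p2_nonneg θ₀) hf₂ hg₂
  have hcont₁ : ∀ s ≠ 0, ContinuousAt (fun s => (p1 θ₀ s : ℂ) * f₁ s * conj (g₁ s)) s :=
    fun s hs => by have := continuousAt_p1 θ₀ hs; fun_prop
  have hcont₂ : ∀ s ≠ 0, ContinuousAt (fun s => (p2 θ₀ s : ℂ) * f₂ s * conj (g₂ s)) s :=
    fun s hs => by have := continuousAt_p2 θ₀ hs; fun_prop
  refine ⟨fun t ht ht' => ?_, fun t ht ht' => ?_⟩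
  · have hD := hasDerivAt_half_setIntegral_Ioc_sigma h0 h1 hσ (p1_neg θ₀) hint₁ hcont₁ ⟨ht, ht'⟩
    have hGt : G =ᶠ[𝓝 t] fun u => ((1 / 2 : ℂ) * (∫ s, (p1 θ₀ s : ℂ) * f₁ s * conj (g₁ s))
        + (1 / 2) * ∫ s, (p2 θ₀ s : ℂ) * f₂ s * conj (g₂ s)) -
        (1 / 2 : ℂ) * ∫ s in Ioc (-σ u) (σ u), (p1 θ₀ s : ℂ) * f₁ s * conj (g₁ s) := by
      filter_upwards [Ioi_mem_nhds ht] with u (hu : 0 < u)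
      rw [hG u, if_pos hu, setIntegral_compl measurableSet_Ioc hint₁]
      ring
    simpa using (hD.const_sub _).congr_of_eventuallyEq hGt
  · have hD := hasDerivAt_half_setIntegral_Ioc_sigma h0 h1 hσ (p2_neg θ₀) hint₂ hcont₂
      (t := -t) ⟨by linarith, by linarith⟩
    have hGt : G =ᶠ[𝓝 t] fun u => (1 / 2 : ℂ) *
        ∫ s in Ioc (-σ (-u)) (σ (-u)), (p2 θ₀ s : ℂ) * f₂ s * conj (g₂ s) := by
      filter_upwards [Iio_mem_nhds ht'] with u (hu : u < 0)
      rw [hG u, if_neg (not_lt.2 (le_of_lt hu)), if_pos hu]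
    simpa using (hD.scomp t (hasDerivAt_neg t)).congr_of_eventuallyEq hGt
end

section
/- Resonance at λ₀ = 0 with logarithmic rate (abstract form of the dipole-source theorem): let b > 0, β ∈ (0, 1), ε ∈ (0, 1), constants C₃, C₄ ≥ 0 and C ≥ 0, and let μ' : (−b, b)∖{0} → [0, ∞) be a Lebesgue integrable function such that |μ'(t) − C₃·|log t|·t^{−β}| ≤ C·|log t|·t^{−β+ε} and |μ'(−t) − C₄·|log t|·t^{−β}| ≤ C·|log t|·t^{−β+ε} for all t ∈ (0, b). Then lim_{δ→0⁺} |log δ|^{−1}·δ^{1+β}·∫_{−b}^{b} μ'(t)/(t² + δ²) dt = (C₃ + C₄)·∫_0^∞ s^{−β}/(s² + 1) ds. -/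
open Real Filter Topology Set MeasureTheory

lemma log_abs_le_rpow {s η : ℝ} (hs : 0 < s) (hη : 0 < η) (hs1 : s ≤ 1) :
    |Real.log s| ≤ η⁻¹ * s ^ (-η) := by
  have h1 : Real.log (s ^ (-η)) = -η * Real.log s := Real.log_rpow hs _
  have h2 : Real.log (s ^ (-η)) ≤ s ^ (-η) - 1 :=
    Real.log_le_sub_one_of_pos (Real.rpow_pos_of_pos hs _)
  have h3 : (0:ℝ) < s ^ (-η) := Real.rpow_pos_of_pos hs _
  have h4 : -η * Real.log s ≤ s ^ (-η) - 1 := h1 ▸ h2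
  rw [abs_of_nonpos (Real.log_nonpos hs.le hs1), inv_mul_eq_div, le_div_iff₀ hη]
  nlinarith

lemma log_abs_le_rpow' {s η : ℝ} (hη : 0 < η) (hs1 : 1 ≤ s) :
    |Real.log s| ≤ η⁻¹ * s ^ η := by
  have hs : (0:ℝ) < s := lt_of_lt_of_le one_pos hs1
  have h1 : Real.log (s ^ η) = η * Real.log s := Real.log_rpow hs _
  have h2 : Real.log (s ^ η) ≤ s ^ η - 1 :=
    Real.log_le_sub_one_of_pos (Real.rpow_pos_of_pos hs _)
  have h3 : (0:ℝ) < s ^ η := Real.rpow_pos_of_pos hs _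
  have h4 : η * Real.log s ≤ s ^ η - 1 := h1 ▸ h2
  rw [abs_of_nonneg (Real.log_nonneg hs1), inv_mul_eq_div, le_div_iff₀ hη]
  nlinarith

lemma aux_meas (p : ℝ) : Measurable (fun s : ℝ => (1 + |Real.log s|) * s ^ p / (s ^ 2 + 1)) := by
  measurability

lemma aux_integrable {p : ℝ} (hp1 : -1 < p) (hp2 : p < 1) :
    IntegrableOn (fun s : ℝ => (1 + |Real.log s|) * s ^ p / (s ^ 2 + 1)) (Set.Ioi 0) := by
  rw [← Set.Ioc_union_Ioi_eq_Ioi (zero_le_one (α := ℝ))]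
  apply MeasureTheory.IntegrableOn.union
  · set η : ℝ := (1 + p) / 2 with hη
    have hηpos : 0 < η := by rw [hη]; linarith
    have i1 : IntegrableOn (fun s : ℝ => s ^ p) (Set.Ioc 0 1) :=
      (intervalIntegrable_iff_integrableOn_Ioc_of_le zero_le_one).1
        (intervalIntegral.intervalIntegrable_rpow' hp1)
    have i2 : IntegrableOn (fun s : ℝ => s ^ (p - η)) (Set.Ioc 0 1) :=
      (intervalIntegrable_iff_integrableOn_Ioc_of_le zero_le_one).1
        (intervalIntegral.intervalIntegrable_rpow' (by rw [hη]; linarith))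
    have hmaj : IntegrableOn (fun s : ℝ => s ^ p + η⁻¹ * s ^ (p - η)) (Set.Ioc 0 1) :=
      i1.add (i2.const_mul _)
    refine hmaj.mono' ((aux_meas p).aestronglyMeasurable.restrict) ?_
    refine (MeasureTheory.ae_restrict_iff' measurableSet_Ioc).2 (Filter.Eventually.of_forall ?_)
    rintro s ⟨hs0, hs1⟩
    have hsp : (0:ℝ) < s ^ p := Real.rpow_pos_of_pos hs0 _
    have hlog : |Real.log s| ≤ η⁻¹ * s ^ (-η) := log_abs_le_rpow hs0 hηpos hs1
    rw [Real.norm_eq_abs, abs_of_nonneg (by positivity)]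
    have key : (1 + |Real.log s|) * s ^ p ≤ s ^ p + η⁻¹ * s ^ (p - η) := by
      have hsplit : s ^ (p - η) = s ^ (-η) * s ^ p := by
        rw [← Real.rpow_add hs0]; ring_nf
      rw [hsplit]
      nlinarith [abs_nonneg (Real.log s), mul_le_mul_of_nonneg_right hlog hsp.le]
    calc (1 + |Real.log s|) * s ^ p / (s ^ 2 + 1) ≤ (1 + |Real.log s|) * s ^ p :=
          div_le_self (by positivity) (by nlinarith [sq_nonneg s])
      _ ≤ s ^ p + η⁻¹ * s ^ (p - η) := key
  · set η : ℝ := (1 - p) / 2 with hη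
    have hηpos : 0 < η := by rw [hη]; linarith
    have hmaj : IntegrableOn (fun s : ℝ => (1 + η⁻¹) * s ^ (p - 2 + η)) (Set.Ioi 1) :=
      (integrableOn_Ioi_rpow_of_lt (by rw [hη]; linarith) one_pos).const_mul _
    refine hmaj.mono' ((aux_meas p).aestronglyMeasurable.restrict) ?_
    refine (MeasureTheory.ae_restrict_iff' measurableSet_Ioi).2 (Filter.Eventually.of_forall ?_)
    intro s hs1
    have hs0 : (0:ℝ) < s := lt_trans one_pos hs1
    have hsq : (0:ℝ) < s ^ 2 + 1 := by positivity
    have hlog : |Real.log s| ≤ η⁻¹ * s ^ η := log_abs_le_rpow' hηpos hs1.le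
    rw [Real.norm_eq_abs, abs_of_nonneg (by positivity)]
    have hs2 : s ^ p / (s ^ 2 + 1) ≤ s ^ (p - 2) := by
      rw [div_le_iff₀ hsq]
      have he : s ^ (p-2) * (s^2 + 1) = s ^ p + s ^ (p-2) := by
        rw [mul_add, mul_one, ← Real.rpow_natCast s 2, ← Real.rpow_add hs0]
        norm_num
      rw [he]
      have : (0:ℝ) < s ^ (p - 2) := Real.rpow_pos_of_pos hs0 _
      linarith
    have hse : (1:ℝ) ≤ s ^ η := Real.one_le_rpow hs1.le hηpos.le
    calc (1 + |Real.log s|) * s ^ p / (s ^ 2 + 1)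
        = (1 + |Real.log s|) * (s ^ p / (s ^ 2 + 1)) := by ring
      _ ≤ (1 + η⁻¹ * s ^ η) * s ^ (p - 2) := by
          apply mul_le_mul (by linarith) hs2 (by positivity) (by positivity)
      _ ≤ ((1 + η⁻¹) * s ^ η) * s ^ (p - 2) := by
          have : (0:ℝ) < s ^ (p-2) := Real.rpow_pos_of_pos hs0 _
          nlinarith [inv_pos.2 hηpos]
      _ = (1 + η⁻¹) * s ^ (p - 2 + η) := by
          rw [Real.rpow_add hs0]; ring

lemma rpow_tendsto {ε : ℝ} (hε : 0 < ε) : Tendsto (fun δ:ℝ => δ^ε) (𝓝[>] 0) (𝓝 0) := by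
  have h := (Real.continuousAt_rpow_const 0 ε (Or.inr hε.le)).tendsto
  rw [Real.zero_rpow hε.ne'] at h
  exact h.mono_left nhdsWithin_le_nhds

lemma ratio_tendsto {s : ℝ} (hs : 0 < s) :
    Tendsto (fun δ : ℝ => |Real.log (δ * s)| / |Real.log δ|) (𝓝[>] 0) (𝓝 1) := by
  have hlogtop : Tendsto (fun δ : ℝ => -Real.log δ) (𝓝[>] 0) atTop :=
    tendsto_neg_atBot_atTop.comp Real.tendsto_log_nhdsGT_zero
  have t1 : Tendsto (fun δ : ℝ => Real.log s / Real.log δ) (𝓝[>] 0) (𝓝 0) := by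
    have := Tendsto.const_div_atTop hlogtop (-Real.log s)
    simpa only [neg_div_neg_eq] using this
  have t2 : Tendsto (fun δ : ℝ => |1 + Real.log s / Real.log δ|) (𝓝[>] 0) (𝓝 1) := by
    have := ((tendsto_const_nhds (x := (1:ℝ))).add t1).abs
    simpa using this
  refine t2.congr' ?_
  filter_upwards [Ioo_mem_nhdsGT_of_mem (by constructor <;> norm_num : (0:ℝ) ∈ Set.Ico 0 1)]
    with δ hδ
  have hδ0 : 0 < δ := hδ.1
  have hlogne : Real.log δ ≠ 0 := ne_of_lt (Real.log_neg hδ0 hδ.2)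
  rw [Real.log_mul hδ0.ne' hs.ne', ← abs_div, add_div, div_self hlogne]

lemma key_identity (b β : ℝ) (hb : 0 < b) (g : ℝ → ℝ) {δ : ℝ} (hδ : 0 < δ) :
    |Real.log δ|⁻¹ * δ ^ (1 + β) * ∫ t in Set.Ioo 0 b, g t / (t ^ 2 + δ ^ 2) =
      ∫ s in Set.Ioi (0:ℝ), Set.indicator (Set.Ioo 0 (b/δ))
        (fun s => |Real.log δ|⁻¹ * δ ^ β * (g (δ*s) / (s^2+1))) s := by
  have hbδ : 0 < b / δ := div_pos hb hδ
  rw [MeasureTheory.setIntegral_indicator measurableSet_Ioo,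
    Set.inter_eq_right.2 Set.Ioo_subset_Ioi_self, MeasureTheory.integral_const_mul]
  have step1 : ∀ s : ℝ, g (δ*s) / (s^2+1) = δ^2 * (g (δ*s) / ((δ*s)^2 + δ^2)) := by
    intro s
    have hd1 : (s:ℝ)^2+1 ≠ 0 := by positivity
    have hd2 : ((δ*s):ℝ)^2+δ^2 ≠ 0 := by positivity
    field_simp
  simp only [step1]
  rw [MeasureTheory.integral_const_mul]
  have hci := intervalIntegral.integral_comp_mul_left (a := 0) (b := b/δ)
    (fun t => g t / (t^2 + δ^2)) hδ.ne'
  simp only [mul_zero, smul_eq_mul, show δ * (b/δ) = b by field_simp] at hci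
  have hsub : (∫ s in Set.Ioo 0 (b/δ), g (δ*s) / ((δ*s)^2 + δ^2)) =
      δ⁻¹ * ∫ t in Set.Ioo 0 b, g t / (t^2 + δ^2) := by
    rw [← MeasureTheory.integral_Ioc_eq_integral_Ioo, ← intervalIntegral.integral_of_le hbδ.le,
      hci, intervalIntegral.integral_of_le hb.le, MeasureTheory.integral_Ioc_eq_integral_Ioo]
  rw [hsub, Real.rpow_add hδ, Real.rpow_one]
  have hdd : (δ:ℝ)^2 * δ⁻¹ = δ := by field_simp [sq]
  linear_combination (-(|Real.log δ|⁻¹ * δ ^ β * ∫ t in Set.Ioo 0 b, g t / (t^2+δ^2))) * hdd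

lemma one_sided (b β ε A D : ℝ) (hb : 0 < b) (hβ0 : 0 < β) (hβ1 : β < 1)
    (hε0 : 0 < ε) (hε1 : ε < 1) (hA : 0 ≤ A) (hD : 0 ≤ D)
    (g : ℝ → ℝ) (hg : IntegrableOn g (Set.Ioo 0 b))
    (hbd : ∀ t, 0 < t → t < b →
      |g t - A * |Real.log t| * t ^ (-β)| ≤ D * |Real.log t| * t ^ (-β + ε)) :
    Tendsto (fun δ : ℝ =>
        |Real.log δ|⁻¹ * δ ^ (1 + β) * ∫ t in Set.Ioo 0 b, g t / (t ^ 2 + δ ^ 2))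
      (𝓝[>] 0) (𝓝 (A * ∫ s in Set.Ioi (0:ℝ), s ^ (-β) / (s ^ 2 + 1))) := by
  set H : ℝ → ℝ → ℝ := fun δ => Set.indicator (Set.Ioo 0 (b/δ))
      (fun s => |Real.log δ|⁻¹ * δ ^ β * (g (δ*s) / (s^2+1))) with hH
  have habs : ∀ t, 0 < t → t < b →
      |g t| ≤ A * |Real.log t| * t ^ (-β) + D * |Real.log t| * t ^ (-β+ε) := by
    intro t h1 h2
    have h3 := hbd t h1 h2
    have h4 : |A * |Real.log t| * t ^ (-β)| = A * |Real.log t| * t ^ (-β) :=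
      abs_of_nonneg (by positivity)
    calc |g t| = |(g t - A * |Real.log t| * t ^ (-β)) + A * |Real.log t| * t ^ (-β)| := by
          ring_nf
      _ ≤ |g t - A * |Real.log t| * t ^ (-β)| + |A * |Real.log t| * t ^ (-β)| := abs_add_le _ _
      _ ≤ A * |Real.log t| * t ^ (-β) + D * |Real.log t| * t ^ (-β+ε) := by
          rw [h4]; linarith
  set bound : ℝ → ℝ := fun s => A * ((1 + |Real.log s|) * s ^ (-β) / (s^2+1)) +
      D * ((1 + |Real.log s|) * s ^ (-β+ε) / (s^2+1)) with hbound
  have hbound_int : IntegrableOn bound (Set.Ioi 0) :=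
    ((aux_integrable (by linarith) (by linarith)).const_mul A).add
      ((aux_integrable (by linarith) (by linarith)).const_mul D)
  have hmeas : ∀ᶠ δ in 𝓝[>] (0:ℝ), AEStronglyMeasurable (H δ) (volume.restrict (Set.Ioi 0)) := by
    filter_upwards [self_mem_nhdsWithin] with δ hδ
    have hδ0 : (0:ℝ) < δ := hδ
    set G : ℝ → ℝ := Set.indicator (Set.Ioo 0 b) g with hG
    have hGint : Integrable G := hg.integrable_indicator measurableSet_Ioo
    have hGδ : Integrable (fun s => G (δ * s)) := hGint.comp_mul_left' hδ0.ne'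
    have h1 : Integrable (fun s : ℝ => (1/(s^2+1)) * G (δ*s)) := by
      apply hGδ.bdd_mul (c := 1)
      · apply Measurable.aestronglyMeasurable; measurability
      · refine Filter.Eventually.of_forall fun s => ?_
        rw [Real.norm_eq_abs, abs_of_nonneg (by positivity), div_le_one (by positivity)]
        nlinarith [sq_nonneg s]
    have h2 : Integrable (fun s : ℝ => |Real.log δ|⁻¹ * δ ^ β * (G (δ*s) / (s^2+1))) := by
      have h := h1.const_mul (|Real.log δ|⁻¹ * δ ^ β)
      refine h.congr (Filter.Eventually.of_forall fun s => ?_)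
      ring
    have hind : H δ = Set.indicator (Set.Ioo 0 (b/δ))
        (fun s => |Real.log δ|⁻¹ * δ ^ β * (G (δ*s) / (s^2+1))) := by
      simp only [hH]
      apply Set.indicator_congr
      intro s hs
      have hmem : δ * s ∈ Set.Ioo 0 b := by
        refine ⟨mul_pos hδ0 hs.1, ?_⟩
        rw [mul_comm]
        exact (lt_div_iff₀ hδ0).1 hs.2
      simp only [hG, Set.indicator_of_mem hmem]
    rw [hind]
    exact ((h2.indicator measurableSet_Ioo).aestronglyMeasurable).restrict
  have hexp1 : Real.exp (-1) < 1 := by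
    have := Real.exp_lt_exp.2 (show (-1:ℝ) < 0 by norm_num)
    simpa using this
  have hdom : ∀ᶠ δ in 𝓝[>] (0:ℝ),
      ∀ᵐ s ∂(volume.restrict (Set.Ioi 0)), ‖H δ s‖ ≤ bound s := by
    filter_upwards [Ioo_mem_nhdsGT_of_mem
      (⟨le_refl 0, Real.exp_pos (-1)⟩ : (0:ℝ) ∈ Set.Ico 0 (Real.exp (-1)))] with δ hδ
    have hδ0 : 0 < δ := hδ.1
    have hδ1 : δ < 1 := lt_trans hδ.2 hexp1
    have hL1 : 1 ≤ |Real.log δ| := by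
      have h1 : Real.log δ < Real.log (Real.exp (-1)) := Real.log_lt_log hδ0 hδ.2
      rw [Real.log_exp] at h1
      rw [abs_of_neg (by linarith : Real.log δ < 0)]
      linarith
    refine (MeasureTheory.ae_restrict_iff' measurableSet_Ioi).2 (Filter.Eventually.of_forall ?_)
    intro s hs
    have hs0 : (0:ℝ) < s := hs
    have hq : (0:ℝ) < s^2+1 := by positivity
    have hbnn : 0 ≤ bound s := by
      simp only [hbound]
      have b1 : (0:ℝ) ≤ (1 + |Real.log s|) * s ^ (-β) / (s^2+1) := by positivity
      have b2 : (0:ℝ) ≤ (1 + |Real.log s|) * s ^ (-β+ε) / (s^2+1) := by positivity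
      nlinarith
    by_cases hmem : s ∈ Set.Ioo 0 (b/δ)
    · have hsb : δ * s < b := by rw [mul_comm]; exact (lt_div_iff₀ hδ0).1 hmem.2
      have hgabs := habs (δ*s) (mul_pos hδ0 hs0) hsb
      have e2 : |Real.log (δ*s)| ≤ |Real.log δ| * (1 + |Real.log s|) := by
        have ha : |Real.log (δ*s)| ≤ |Real.log δ| + |Real.log s| := by
          rw [Real.log_mul hδ0.ne' hs0.ne']
          exact abs_add_le _ _
        nlinarith [abs_nonneg (Real.log s),
          mul_le_mul_of_nonneg_right hL1 (abs_nonneg (Real.log s))]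
      have p1 : δ^β * δ^(-β) = 1 := by
        rw [← Real.rpow_add hδ0]; simp
      have p2 : δ^β * δ^(-β+ε) = δ^ε := by
        rw [← Real.rpow_add hδ0]; ring_nf
      have hδε : δ^ε ≤ 1 := Real.rpow_le_one hδ0.le hδ1.le hε0.le
      have hm1 : (δ*s)^(-β) = δ^(-β) * s^(-β) := Real.mul_rpow hδ0.le hs0.le
      have hm2 : (δ*s)^(-β+ε) = δ^(-β+ε) * s^(-β+ε) := Real.mul_rpow hδ0.le hs0.le
      have hLpos : (0:ℝ) < |Real.log δ| := lt_of_lt_of_le one_pos hL1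
      have N : δ^β * |g (δ*s)| ≤
          |Real.log δ| * ((1 + |Real.log s|) * (A * s^(-β) + D * s^(-β+ε))) := by
        calc δ^β * |g (δ*s)|
            ≤ δ^β * (A * |Real.log (δ*s)| * (δ*s)^(-β) + D * |Real.log (δ*s)| * (δ*s)^(-β+ε)) :=
              mul_le_mul_of_nonneg_left hgabs (Real.rpow_nonneg hδ0.le β)
          _ = A * |Real.log (δ*s)| * s^(-β) + δ^ε * (D * |Real.log (δ*s)| * s^(-β+ε)) := by
              rw [hm1, hm2]
              linear_combination (A * |Real.log (δ*s)| * s^(-β)) * p1 +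
                (D * |Real.log (δ*s)| * s^(-β+ε)) * p2
          _ ≤ A * (|Real.log δ| * (1 + |Real.log s|)) * s^(-β) +
              1 * (D * (|Real.log δ| * (1 + |Real.log s|)) * s^(-β+ε)) := by
              have q1 : A * |Real.log (δ*s)| * s^(-β) ≤
                  A * (|Real.log δ| * (1 + |Real.log s|)) * s^(-β) :=
                mul_le_mul_of_nonneg_right (mul_le_mul_of_nonneg_left e2 hA)
                  (Real.rpow_nonneg hs0.le _)
              have q2 : δ^ε * (D * |Real.log (δ*s)| * s^(-β+ε)) ≤
                  1 * (D * (|Real.log δ| * (1 + |Real.log s|)) * s^(-β+ε)) := by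
                apply mul_le_mul hδε
                  (mul_le_mul_of_nonneg_right (mul_le_mul_of_nonneg_left e2 hD)
                    (Real.rpow_nonneg hs0.le _))
                  (by positivity) one_pos.le
              linarith
          _ = |Real.log δ| * ((1 + |Real.log s|) * (A * s^(-β) + D * s^(-β+ε))) := by ring
      have hval : H δ s = |Real.log δ|⁻¹ * δ^β * (g (δ*s)/(s^2+1)) := by
        simp only [hH]
        exact Set.indicator_of_mem hmem _
      rw [hval, Real.norm_eq_abs]
      have habs2 : |(|Real.log δ|)⁻¹ * δ^β * (g (δ*s)/(s^2+1))| =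
          |Real.log δ|⁻¹ * δ^β * (|g (δ*s)|/(s^2+1)) := by
        rw [abs_mul, abs_mul, abs_div, abs_of_nonneg (inv_nonneg.2 (abs_nonneg _)),
          abs_of_nonneg (Real.rpow_nonneg hδ0.le _), abs_of_pos hq]

      rw [habs2]
      calc |Real.log δ|⁻¹ * δ^β * (|g (δ*s)|/(s^2+1))
          = (δ^β * |g (δ*s)|) * (|Real.log δ|⁻¹ * (s^2+1)⁻¹) := by ring
        _ ≤ (|Real.log δ| * ((1 + |Real.log s|) * (A * s^(-β) + D * s^(-β+ε)))) *
            (|Real.log δ|⁻¹ * (s^2+1)⁻¹) := mul_le_mul_of_nonneg_right N (by positivity)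
        _ = ((1 + |Real.log s|) * (A * s^(-β) + D * s^(-β+ε))) * (s^2+1)⁻¹ := by
            have hli : |Real.log δ| * |Real.log δ|⁻¹ = 1 := mul_inv_cancel₀ hLpos.ne'
            linear_combination (((1 + |Real.log s|) * (A * s^(-β) + D * s^(-β+ε))) * (s^2+1)⁻¹) * hli
        _ = bound s := by simp only [hbound]; ring
    · simp only [hH, Set.indicator_of_notMem hmem, norm_zero]
      exact hbnn
  have hlim : ∀ᵐ s ∂(volume.restrict (Set.Ioi 0)),
      Tendsto (fun δ => H δ s) (𝓝[>] 0) (𝓝 (A * (s^(-β)/(s^2+1)))) := by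
    refine (MeasureTheory.ae_restrict_iff' measurableSet_Ioi).2 (Filter.Eventually.of_forall ?_)
    intro s hs
    have hs0 : (0:ℝ) < s := hs
    have hq : (0:ℝ) < s^2+1 := by positivity
    set main : ℝ → ℝ := fun δ =>
      A * (|Real.log (δ*s)|/|Real.log δ|) * (s^(-β)/(s^2+1)) with hmain
    have hmt : Tendsto main (𝓝[>] 0) (𝓝 (A * (s^(-β)/(s^2+1)))) := by
      have h := ((ratio_tendsto hs0).const_mul A).mul_const (s^(-β)/(s^2+1))
      simpa using h
    have herr : Tendsto (fun δ => H δ s - main δ) (𝓝[>] 0) (𝓝 0) := by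
      apply squeeze_zero_norm'
        (a := fun δ => D * (|Real.log (δ*s)|/|Real.log δ|) * δ^ε * (s^(-β+ε)/(s^2+1)))
      · filter_upwards [Ioo_mem_nhdsGT_of_mem
          (⟨le_refl 0, lt_min one_pos (div_pos hb hs0)⟩ :
            (0:ℝ) ∈ Set.Ico 0 (min 1 (b/s)))] with δ hδ
        have hδ0 : 0 < δ := hδ.1
        have hδ1 : δ < 1 := lt_of_lt_of_le hδ.2 (min_le_left _ _)
        have hδb : δ < b/s := lt_of_lt_of_le hδ.2 (min_le_right _ _)
        have hmem : s ∈ Set.Ioo 0 (b/δ) := by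
          refine ⟨hs0, ?_⟩
          rw [lt_div_iff₀ hδ0]
          rw [lt_div_iff₀ hs0] at hδb
          linarith [hδb]
        have hsb : δ * s < b := by
          rw [lt_div_iff₀ hs0] at hδb; linarith
        have p1 : δ^β * δ^(-β) = 1 := by rw [← Real.rpow_add hδ0]; simp
        have p2 : δ^β * δ^(-β+ε) = δ^ε := by rw [← Real.rpow_add hδ0]; ring_nf
        have hm1 : (δ*s)^(-β) = δ^(-β) * s^(-β) := Real.mul_rpow hδ0.le hs0.le
        have hm2 : (δ*s)^(-β+ε) = δ^(-β+ε) * s^(-β+ε) := Real.mul_rpow hδ0.le hs0.le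
        have hval : H δ s = |Real.log δ|⁻¹ * δ^β * (g (δ*s)/(s^2+1)) := by
          simp only [hH]
          exact Set.indicator_of_mem hmem _
        have hHm : H δ s - main δ = |Real.log δ|⁻¹ * δ^β *
            ((g (δ*s) - A * |Real.log (δ*s)| * (δ*s)^(-β))/(s^2+1)) := by
          rw [hval]
          simp only [hmain, hm1]
          linear_combination (A * |Real.log (δ*s)| * |Real.log δ|⁻¹ * s^(-β) / (s^2+1)) * p1
        rw [hHm, Real.norm_eq_abs]
        have habs2 : |(|Real.log δ|)⁻¹ * δ^β *
            ((g (δ*s) - A * |Real.log (δ*s)| * (δ*s)^(-β))/(s^2+1))| =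
            |Real.log δ|⁻¹ * δ^β * (|g (δ*s) - A * |Real.log (δ*s)| * (δ*s)^(-β)|/(s^2+1)) := by
          rw [abs_mul, abs_mul, abs_div, abs_of_nonneg (inv_nonneg.2 (abs_nonneg _)),
            abs_of_nonneg (Real.rpow_nonneg hδ0.le _), abs_of_pos hq]

        rw [habs2]
        calc |Real.log δ|⁻¹ * δ^β * (|g (δ*s) - A * |Real.log (δ*s)| * (δ*s)^(-β)|/(s^2+1))
            ≤ |Real.log δ|⁻¹ * δ^β * ((D * |Real.log (δ*s)| * (δ*s)^(-β+ε))/(s^2+1)) := by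
              apply mul_le_mul_of_nonneg_left _ (by positivity)
              exact (div_le_div_iff_of_pos_right hq).2 (hbd (δ*s) (mul_pos hδ0 hs0) hsb)
          _ = D * (|Real.log (δ*s)|/|Real.log δ|) * δ^ε * (s^(-β+ε)/(s^2+1)) := by
              rw [hm2]
              linear_combination (D * |Real.log (δ*s)| * |Real.log δ|⁻¹ * s^(-β+ε)/(s^2+1)) * p2
      · have h := (((ratio_tendsto hs0).const_mul D).mul (rpow_tendsto hε0)).mul_const
          (s^(-β+ε)/(s^2+1))
        simpa using h
    have hsum := hmt.add herr
    rw [add_zero] at hsum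
    refine hsum.congr (fun δ => by ring)
  have hdct := MeasureTheory.tendsto_integral_filter_of_dominated_convergence bound
    hmeas hdom hbound_int hlim
  rw [MeasureTheory.integral_const_mul] at hdct
  refine hdct.congr' ?_
  filter_upwards [self_mem_nhdsWithin] with δ hδ
  have h := key_identity b β hb g (hδ : (0:ℝ) < δ)
  simp only [hH]
  exact h.symm


/-- resonance at `λ₀ = 0` with logarithmic rate, abstract form: let
`b > 0`, `β, ε ∈ (0,1)`, `C₃, C₄, C ≥ 0`, and let `μ' ≥ 0` be integrable on `(−b,b)` with
`|μ'(±t) − C_{3/4}·|log t|·t^{−β+ε}| ≤ C·|log t|·t^{−β+ε}` for `t ∈ (0,b)`. Then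
`|log δ|⁻¹·δ^{1+β}·∫_{−b}^{b} μ'(t)/(t²+δ²) dt → (C₃+C₄)·∫₀^∞ s^{−β}/(s²+1) ds`
as `δ → 0⁺`. -/
theorem statement18 (b β ε C₃ C₄ C : ℝ) (hb : 0 < b)
    (hβ : β ∈ Set.Ioo (0 : ℝ) 1) (hε : ε ∈ Set.Ioo (0 : ℝ) 1)
    (hC₃ : 0 ≤ C₃) (hC₄ : 0 ≤ C₄) (hC : 0 ≤ C)
    (μ' : ℝ → ℝ)
    (hnonneg : ∀ t ∈ Set.Ioo (-b) b, t ≠ 0 → 0 ≤ μ' t)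
    (hint : IntegrableOn μ' (Set.Ioo (-b) b))
    (hbound : ∀ t : ℝ, 0 < t → t < b →
      |μ' t - C₃ * |Real.log t| * t ^ (-β)| ≤ C * |Real.log t| * t ^ (-β + ε) ∧
      |μ' (-t) - C₄ * |Real.log t| * t ^ (-β)| ≤ C * |Real.log t| * t ^ (-β + ε)) :
    Tendsto
      (fun δ : ℝ =>
        |Real.log δ|⁻¹ * δ ^ (1 + β) * ∫ t in Set.Ioo (-b) b, μ' t / (t ^ 2 + δ ^ 2))
      (𝓝[>] 0)
      (𝓝 ((C₃ + C₄) * ∫ s in Set.Ioi (0 : ℝ), s ^ (-β) / (s ^ 2 + 1))) := by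
  have h1int : IntegrableOn μ' (Set.Ioo 0 b) :=
    hint.mono_set (Set.Ioo_subset_Ioo (by linarith) le_rfl)
  have h2int : IntegrableOn (fun t => μ' (-t)) (Set.Ioo 0 b) := by
    have hmono : IntegrableOn μ' (Set.Ioo (-b) 0) :=
      hint.mono_set (Set.Ioo_subset_Ioo le_rfl hb.le)
    have hG : Integrable (Set.indicator (Set.Ioo (-b) 0) μ') :=
      hmono.integrable_indicator measurableSet_Ioo
    have hGneg : Integrable (fun t => Set.indicator (Set.Ioo (-b) 0) μ' (-1 * t)) :=
      hG.comp_mul_left' (by norm_num)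
    have heq : (fun t => Set.indicator (Set.Ioo (-b) 0) μ' (-1 * t)) =
        Set.indicator (Set.Ioo 0 b) (fun t => μ' (-t)) := by
      funext t
      by_cases h : t ∈ Set.Ioo 0 b
      · rw [Set.indicator_of_mem h]
        have hm : (-1 * t) ∈ Set.Ioo (-b) 0 := by
          constructor
          · simp only [neg_one_mul, neg_lt_neg_iff]; exact h.2
          · simp only [neg_one_mul]; linarith [h.1]
        rw [Set.indicator_of_mem hm]
        norm_num
      · rw [Set.indicator_of_notMem h]
        have hm : (-1 * t) ∉ Set.Ioo (-b) 0 := by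
          intro hc
          apply h
          constructor
          · simpa using hc.2
          · have := hc.1; simp only [neg_one_mul] at this; linarith [neg_lt_neg_iff.1 this]
        rw [Set.indicator_of_notMem hm]
    rw [heq] at hGneg
    exact (integrable_indicator_iff measurableSet_Ioo).1 hGneg
  have T1 := one_sided b β ε C₃ C hb hβ.1 hβ.2 hε.1 hε.2 hC₃ hC μ' h1int
    (fun t h1 h2 => (hbound t h1 h2).1)
  have T2 : Tendsto (fun δ : ℝ =>
      |Real.log δ|⁻¹ * δ ^ (1 + β) * ∫ t in Set.Ioo 0 b, μ' (-t) / (t ^ 2 + δ ^ 2))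
      (𝓝[>] 0) (𝓝 (C₄ * ∫ s in Set.Ioi (0:ℝ), s ^ (-β) / (s ^ 2 + 1))) :=
    one_sided b β ε C₄ C hb hβ.1 hβ.2 hε.1 hε.2 hC₄ hC (fun t => μ' (-t)) h2int
      (fun t h1 h2 => (hbound t h1 h2).2)
  have hsum := T2.add T1
  rw [show (C₄ * ∫ s in Set.Ioi (0:ℝ), s ^ (-β) / (s ^ 2 + 1)) +
      C₃ * ∫ s in Set.Ioi (0:ℝ), s ^ (-β) / (s ^ 2 + 1) =
      (C₃ + C₄) * ∫ s in Set.Ioi (0:ℝ), s ^ (-β) / (s ^ 2 + 1) by ring] at hsum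
  refine hsum.congr' ?_
  filter_upwards [self_mem_nhdsWithin] with δ hδ
  have hδ0 : (0:ℝ) < δ := hδ
  have hfint : IntegrableOn (fun t => μ' t / (t^2+δ^2)) (Set.Ioo (-b) b) := by
    have hb1 : Integrable (fun t => (t^2+δ^2)⁻¹ * μ' t) (volume.restrict (Set.Ioo (-b) b)) := by
      apply hint.bdd_mul (c := (δ^2)⁻¹)
      · apply Measurable.aestronglyMeasurable; measurability
      · refine Filter.Eventually.of_forall fun t => ?_
        have hq : (0:ℝ) < t^2 + δ^2 := by positivity
        rw [Real.norm_eq_abs, abs_of_pos (inv_pos.2 hq)]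
        exact inv_anti₀ (by positivity) (by nlinarith [sq_nonneg t])
    refine hb1.congr (Filter.Eventually.of_forall fun t => ?_)
    ring
  have hunion : Set.Ioc (-b) 0 ∪ Set.Ioo 0 b = Set.Ioo (-b) b :=
    Set.Ioc_union_Ioo_eq_Ioo (by linarith) hb
  have hdisj : Disjoint (Set.Ioc (-b) 0) (Set.Ioo 0 b) :=
    Set.disjoint_left.2 fun t ht ht' => absurd ht'.1 (not_lt.2 ht.2)
  have hsplit : (∫ t in Set.Ioo (-b) b, μ' t/(t^2+δ^2)) =
      (∫ t in Set.Ioo 0 b, μ' (-t)/(t^2+δ^2)) + ∫ t in Set.Ioo 0 b, μ' t/(t^2+δ^2) := by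
    rw [← hunion, MeasureTheory.setIntegral_union hdisj measurableSet_Ioo
      (hfint.mono_set (by rw [← hunion]; exact Set.subset_union_left))
      (hfint.mono_set (by rw [← hunion]; exact Set.subset_union_right))]
    congr 1
    have h1 : (∫ t in Set.Ioo 0 b, μ' (-t)/(t^2+δ^2)) =
        ∫ t in Set.Ioo 0 b, (fun u => μ' u/(u^2+δ^2)) (-t) := by
      simp only [neg_sq]
    rw [h1, ← MeasureTheory.integral_Ioc_eq_integral_Ioo,
      ← intervalIntegral.integral_of_le hb.le,
      intervalIntegral.integral_comp_neg (fun u => μ' u/(u^2+δ^2)), neg_zero,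
      intervalIntegral.integral_of_le (by linarith : -b ≤ (0:ℝ))]
  rw [hsplit]
  ring
end

section
/- Core scaling limit for the logarithmic resonance rate: for every b > 0 and β ∈ (0, 1), lim_{δ→0⁺} |log δ|^{−1}·δ^{1+β}·∫_0^b |log t|·t^{−β}/(t² + δ²) dt = ∫_0^∞ s^{−β}/(s² + 1) ds. -/
/-!
Substituting `t = δ s` turns `δ^{1+β} ∫₀^b |log t| t^{-β}/(t² + δ²) dt` into
`∫₀^{b/δ} |log δ + log s| s^{-β}/(s² + 1) ds`. After division by `|log δ|` the integrand tends to
`s^{-β}/(s² + 1)` pointwise and is dominated by `(1 + |log s|) s^{-β}/(s² + 1)`, which is integrable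
on `(0, ∞)` because `|log s| ≤ (s^ε + s^{-ε})/ε` shifts the exponent `-β` by at most `ε` inside
`(-1, 1)`. Dominated convergence concludes.
-/

open Real Filter Topology Set MeasureTheory

lemma abs_log_le_rpow_add_rpow_neg_div {s ε : ℝ} (hs : 0 < s) (hε : 0 < ε) :
    |log s| ≤ (s ^ ε + s ^ (-ε)) / ε := by
  have hle : log s ≤ s ^ ε / ε := log_le_rpow_div hs.le hε
  have hge : -log s ≤ s ^ (-ε) / ε := by
    rw [← log_inv, rpow_neg hs.le, ← inv_rpow hs.le]
    exact log_le_rpow_div (inv_nonneg.2 hs.le) hε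
  have : 0 ≤ s ^ ε / ε := by positivity
  have : 0 ≤ s ^ (-ε) / ε := by positivity
  rw [add_div, abs_le]
  constructor <;> linarith

lemma integrableOn_rpow_div_sq_add_one {a : ℝ} (ha : a ∈ Ioo (-1) 1) :
    IntegrableOn (fun s : ℝ => s ^ a / (s ^ 2 + 1)) (Ioi 0) := by
  have hmeas : Measurable fun s : ℝ => s ^ a / (s ^ 2 + 1) := by fun_prop
  rw [← Ioc_union_Ioi_eq_Ioi zero_le_one]
  refine IntegrableOn.union ?_ ?_
  · have hdom : IntegrableOn (fun s : ℝ => s ^ a) (Ioc 0 1) := by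
      rw [← intervalIntegrable_iff_integrableOn_Ioc_of_le zero_le_one]
      exact intervalIntegral.intervalIntegrable_rpow' ha.1
    refine hdom.mono' hmeas.aestronglyMeasurable ?_
    filter_upwards [ae_restrict_mem measurableSet_Ioc] with s hs
    have := hs.1
    rw [norm_of_nonneg (by positivity)]
    exact div_le_self (by positivity) (by nlinarith)
  · have hdom : IntegrableOn (fun s : ℝ => s ^ (a - 2)) (Ioi 1) :=
      integrableOn_Ioi_rpow_of_lt (by linarith [ha.2]) one_pos
    refine hdom.mono' hmeas.aestronglyMeasurable ?_
    filter_upwards [ae_restrict_mem measurableSet_Ioi] with s (hs : 1 < s)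
    have hs0 : 0 < s := one_pos.trans hs
    rw [norm_of_nonneg (by positivity), rpow_sub hs0, rpow_two]
    exact div_le_div_of_nonneg_left (by positivity) (by positivity) (by linarith)

lemma integrableOn_log_mul_rpow_div_sq_add_one {a : ℝ} (ha : a ∈ Ioo (-1) 1) :
    IntegrableOn (fun s : ℝ => log s * (s ^ a / (s ^ 2 + 1))) (Ioi 0) := by
  have habs : |a| < 1 := abs_lt.2 ha
  set ε := (1 - |a|) / 2 with hε_def
  have hε : 0 < ε := by linarith
  have hup : a + ε ∈ Ioo (-1) 1 := by constructor <;> linarith [neg_abs_le a, le_abs_self a]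
  have hdown : a + -ε ∈ Ioo (-1) 1 := by constructor <;> linarith [neg_abs_le a, le_abs_self a]
  have hdom := ((integrableOn_rpow_div_sq_add_one hup).add
    (integrableOn_rpow_div_sq_add_one hdown)).const_mul ε⁻¹
  refine hdom.mono' (by fun_prop : Measurable _).aestronglyMeasurable ?_
  filter_upwards [ae_restrict_mem measurableSet_Ioi] with s (hs : 0 < s)
  rw [norm_mul, norm_of_nonneg (by positivity : 0 ≤ s ^ a / (s ^ 2 + 1)), norm_eq_abs,
    Pi.add_apply]
  calc |log s| * (s ^ a / (s ^ 2 + 1))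
      ≤ (s ^ ε + s ^ (-ε)) / ε * (s ^ a / (s ^ 2 + 1)) := by
        gcongr
        exact abs_log_le_rpow_add_rpow_neg_div hs hε
    _ = ε⁻¹ * (s ^ (a + ε) / (s ^ 2 + 1) + s ^ (a + -ε) / (s ^ 2 + 1)) := by
        rw [rpow_add hs, rpow_add hs]
        ring

lemma tendsto_inv_abs_log_mul_abs_log_add (c : ℝ) :
    Tendsto (fun δ : ℝ => |log δ|⁻¹ * |log δ + c|) (𝓝[>] 0) (𝓝 1) := by
  have hlim : Tendsto (fun x : ℝ => |1 + c * x⁻¹|) atBot (𝓝 1) := by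
    simpa using ((tendsto_const_nhds (x := (1 : ℝ))).add
      (tendsto_inv_atBot_zero.const_mul c)).abs
  have hlim' : Tendsto (fun x : ℝ => |x|⁻¹ * |x + c|) atBot (𝓝 1) := by
    refine hlim.congr' ?_
    filter_upwards [eventually_lt_atBot 0] with x hx
    rw [← abs_inv, ← abs_mul, mul_add, inv_mul_cancel₀ hx.ne, mul_comm c]
  exact hlim'.comp tendsto_log_nhdsGT_zero

lemma setIntegral_Ioo_eq_mul_setIntegral_comp_mul {f : ℝ → ℝ} {b δ : ℝ} (hb : 0 ≤ b)
    (hδ : 0 < δ) : ∫ t in Ioo 0 b, f t = δ * ∫ s in Ioo 0 (b / δ), f (δ * s) := by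
  rw [← integral_Ioc_eq_integral_Ioo, ← integral_Ioc_eq_integral_Ioo,
    ← intervalIntegral.integral_of_le hb, ← intervalIntegral.integral_of_le (by positivity),
    intervalIntegral.integral_comp_mul_left _ hδ.ne', mul_zero, mul_div_cancel₀ _ hδ.ne',
    smul_eq_mul, mul_inv_cancel_left₀ hδ.ne']

lemma rpow_mul_setIntegral_Ioo_abs_log_mul_rpow_div_sq_add_sq {b β δ : ℝ} (hb : 0 ≤ b)
    (hδ : 0 < δ) :
    δ ^ (1 + β) * ∫ t in Ioo 0 b, |log t| * t ^ (-β) / (t ^ 2 + δ ^ 2)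
      = ∫ s in Ioo 0 (b / δ), |log (δ * s)| * (s ^ (-β) / (s ^ 2 + 1)) := by
  rw [setIntegral_Ioo_eq_mul_setIntegral_comp_mul hb hδ, ← mul_assoc, ← integral_const_mul]
  refine setIntegral_congr_fun measurableSet_Ioo fun s ⟨hs, _⟩ => ?_
  have : 0 < δ ^ β := by positivity
  rw [mul_rpow hδ.le hs.le, rpow_add hδ, rpow_one, rpow_neg hδ.le]
  field_simp

theorem tendsto_inv_abs_log_mul_setIntegral_Ioo_abs_log_mul {g : ℝ → ℝ} {b : ℝ} (hb : 0 < b)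
    (hg : IntegrableOn g (Ioi 0)) (hlog : IntegrableOn (fun s => log s * g s) (Ioi 0)) :
    Tendsto (fun δ => |log δ|⁻¹ * ∫ s in Ioo 0 (b / δ), |log (δ * s)| * g s) (𝓝[>] 0)
      (𝓝 (∫ s in Ioi 0, g s)) := by
  set F : ℝ → ℝ → ℝ := fun δ s =>
    |log δ|⁻¹ * (Iio (b / δ)).indicator (fun s => |log (δ * s)| * g s) s
  have hF : ∀ δ, |log δ|⁻¹ * ∫ s in Ioo 0 (b / δ), |log (δ * s)| * g s
      = ∫ s in Ioi 0, F δ s := fun δ => by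
    rw [integral_const_mul, setIntegral_indicator measurableSet_Iio, Ioi_inter_Iio]
  simp only [hF]
  have hlog_le : ∀ᶠ δ in 𝓝[>] (0 : ℝ), log δ ≤ -1 :=
    tendsto_log_nhdsGT_zero.eventually (eventually_le_atBot _)
  refine tendsto_integral_filter_of_dominated_convergence (fun s => ‖g s‖ + ‖log s * g s‖)
    (Eventually.of_forall fun δ => ?_) ?_ (hg.norm.add hlog.norm) ?_
  · exact (((measurable_log.comp (measurable_const_mul δ)).abs.aestronglyMeasurable.mul
      hg.aestronglyMeasurable).indicator measurableSet_Iio).const_mul _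
  · filter_upwards [hlog_le, self_mem_nhdsWithin] with δ hδlog (hδ : 0 < δ)
    filter_upwards [ae_restrict_mem measurableSet_Ioi] with s (hs : 0 < s)
    have hL : 1 ≤ |log δ| := by rw [abs_of_neg (by linarith)]; linarith
    have hind := norm_indicator_le_norm_self (fun s => |log (δ * s)| * g s) (s := Iio (b / δ)) s
    rw [norm_mul, norm_abs_eq_norm, log_mul hδ.ne' hs.ne'] at hind
    calc ‖F δ s‖ ≤ |log δ|⁻¹ * (‖log δ + log s‖ * ‖g s‖) := by
          rw [norm_mul, norm_inv, norm_abs_eq_norm, norm_eq_abs (log δ)]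
          gcongr
      _ ≤ |log δ|⁻¹ * ((|log δ| + ‖log s‖) * ‖g s‖) := by
          gcongr
          exact norm_add_le _ _
      _ = ‖g s‖ + |log δ|⁻¹ * (‖log s‖ * ‖g s‖) := by
          rw [add_mul, mul_add, ← mul_assoc, inv_mul_cancel₀ (by positivity), one_mul]
      _ ≤ ‖g s‖ + ‖log s * g s‖ := by
          rw [norm_mul]
          gcongr ‖g s‖ + ?_
          exact mul_le_of_le_one_left (by positivity) (inv_le_one_of_one_le₀ hL)
  · filter_upwards [ae_restrict_mem measurableSet_Ioi] with s (hs : 0 < s)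
    have hlim := (tendsto_inv_abs_log_mul_abs_log_add (log s)).mul_const (g s)
    rw [one_mul] at hlim
    refine hlim.congr' ?_
    filter_upwards [Ioo_mem_nhdsGT (div_pos hb hs)] with δ ⟨hδ, hδs⟩
    have hs_lt : s < b / δ := by rwa [lt_div_iff₀ hδ, mul_comm, ← lt_div_iff₀ hs]
    simp only [F, indicator_of_mem (show s ∈ Iio (b / δ) from hs_lt), log_mul hδ.ne' hs.ne']
    ring

/-- core scaling limit for the logarithmic resonance rate: for every
`b > 0` and `β ∈ (0,1)`,
`|log δ|⁻¹·δ^{1+β}·∫₀^b |log t|·t^{−β}/(t²+δ²) dt → ∫₀^∞ s^{−β}/(s²+1) ds`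
as `δ → 0⁺`. -/
theorem statement19 (b β : ℝ) (hb : 0 < b) (hβ : β ∈ Set.Ioo (0 : ℝ) 1) :
    Tendsto
      (fun δ : ℝ =>
        |Real.log δ|⁻¹ * δ ^ (1 + β)
          * ∫ t in Set.Ioo (0 : ℝ) b, |Real.log t| * t ^ (-β) / (t ^ 2 + δ ^ 2))
      (𝓝[>] 0)
      (𝓝 (∫ s in Set.Ioi (0 : ℝ), s ^ (-β) / (s ^ 2 + 1))) := by
  have hexp : -β ∈ Ioo (-1) 1 := ⟨by linarith [hβ.2], by linarith [hβ.1]⟩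
  refine (tendsto_inv_abs_log_mul_setIntegral_Ioo_abs_log_mul hb
    (integrableOn_rpow_div_sq_add_one hexp)
    (integrableOn_log_mul_rpow_div_sq_add_one hexp)).congr' ?_
  filter_upwards [self_mem_nhdsWithin] with δ (hδ : 0 < δ)
  rw [mul_assoc, rpow_mul_setIntegral_Ioo_abs_log_mul_rpow_div_sq_add_sq hb.le hδ]
end
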